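/- For the dumbbell graph, the entropy-one condition det(A_{−l} − Id) = 0 for its 6×6 weighted adjacency matrix is equivalent to e^{−z} = √((e^{−x−y} − e^{−x} − e^{−y} + 1)/(4e^{−x−y})), equivalently e^{−2z} = (e^x−1)(e^y−1)/4 after simplification, for x, y, z > 0 with (e^x−1)(e^y−1) < 4. -/

import Mathlib

/-!
With `a = e^{-x}`, `b = e^{-y}`, `c = e^{-z}`, the determinant factors as
`(1 - a)(1 - b)((1 - a)(1 - b) - 4abc²)`: the two loop factors are nonzero for `x, y > 0`, so
the entropy-one condition is `c² = (1 - a)(1 - b) / (4ab) = (e^x - 1)(e^y - 1) / 4`, and taking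
square roots is harmless because `c > 0`.
-/

open Real

theorem det_dumbbell_sub_one {R : Type*} [CommRing R] (a b c : R) :
    Matrix.det (!![a, 0, a, 0, 0, 0; 0, b, 0, 0, 0, b; 0, c, 0, 0, c, 0; 0, 0, a, a, 0, 0;
        0, 0, 0, 0, b, b; c, 0, 0, c, 0, 0] - (1 : Matrix (Fin 6) (Fin 6) R)) =
      (1 - a) * (1 - b) * ((1 - a) * (1 - b) - 4 * a * b * c ^ 2) := by
  rw [Matrix.det_succ_row_zero]
  simp [Fin.sum_univ_succ, Matrix.det_succ_row_zero, Matrix.one_apply, Fin.succAbove,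
    Matrix.submatrix]
  ring

theorem det_dumbbell_sub_one_eq_zero_iff {R : Type*} [CommRing R] [IsDomain R] {a b : R}
    (c : R) (ha : a ≠ 1) (hb : b ≠ 1) :
    Matrix.det (!![a, 0, a, 0, 0, 0; 0, b, 0, 0, 0, b; 0, c, 0, 0, c, 0; 0, 0, a, a, 0, 0;
        0, 0, 0, 0, b, b; c, 0, 0, c, 0, 0] - (1 : Matrix (Fin 6) (Fin 6) R)) = 0 ↔
      (1 - a) * (1 - b) = 4 * a * b * c ^ 2 := by
  have hloops : (1 - a) * (1 - b) ≠ 0 :=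
    mul_ne_zero (sub_ne_zero.2 ha.symm) (sub_ne_zero.2 hb.symm)
  rw [det_dumbbell_sub_one, mul_eq_zero, or_iff_right hloops, sub_eq_zero]

theorem exp_neg_sub_exp_neg_div_eq (x y : ℝ) :
    (exp (-x - y) - exp (-x) - exp (-y) + 1) / (4 * exp (-x - y)) =
      (exp x - 1) * (exp y - 1) / 4 := by
  rw [exp_sub, exp_neg, exp_neg]
  field_simp
  ring

theorem dumbbell_entropy_one_condition (x y z : ℝ) (hx : 0 < x) (hy : 0 < y) :
    (Matrix.det
      (!![exp (-x), 0, exp (-x), 0, 0, 0;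
          0, exp (-y), 0, 0, 0, exp (-y);
          0, exp (-z), 0, 0, exp (-z), 0;
          0, 0, exp (-x), exp (-x), 0, 0;
          0, 0, 0, 0, exp (-y), exp (-y);
          exp (-z), 0, 0, exp (-z), 0, 0] - (1 : Matrix (Fin 6) (Fin 6) ℝ)) = 0 ↔
      exp (-z) = Real.sqrt ((exp (-x - y) - exp (-x) - exp (-y) + 1) / (4 * exp (-x - y)))) ∧
    (exp (-z) = Real.sqrt ((exp (-x - y) - exp (-x) - exp (-y) + 1) / (4 * exp (-x - y))) ↔
      exp (-2 * z) = (exp x - 1) * (exp y - 1) / 4) := by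
  rw [exp_neg_sub_exp_neg_div_eq]
  have hsqrt : exp (-z) = √((exp x - 1) * (exp y - 1) / 4) ↔
      exp (-z) ^ 2 = (exp x - 1) * (exp y - 1) / 4 := by
    have hx' := sub_nonneg.2 (one_le_exp hx.le)
    have hy' := sub_nonneg.2 (one_le_exp hy.le)
    rw [eq_comm, sqrt_eq_iff_eq_sq (by positivity) (exp_pos _).le, eq_comm]
  have hsq : exp (-2 * z) = exp (-z) ^ 2 := by rw [sq, ← exp_add]; ring_nf
  refine ⟨?_, by rw [hsqrt, hsq]⟩
  rw [det_dumbbell_sub_one_eq_zero_iff _ (by simpa using hx.ne') (by simpa using hy.ne'),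
    hsqrt, ← exp_neg_sub_exp_neg_div_eq, show -x - y = -x + -y by ring, exp_add,
    eq_div_iff (by positivity)]
  constructor <;> intro h <;> linear_combination -h
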